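/- arXiv:2511.15973 — 2 statements merged into one kernel-verified Lean document; each statement's English description precedes it below -/
import Mathlib

section
/- Define a(r) = 2r / ((r/√2)(1−t) − g_t(r) + 1) where g_t(r) = e^{-r/√2}(t·sin(r/√2) + cos(r/√2)) and t < 1 is a fixed real parameter. Then lim_{r→0⁺} a(r) = √2/(1−t) and lim_{r→∞} a(r) = 2√2/(1−t). -/
/-!
Write `a(r) = 2 / (D(r) / r)` with `D(r) = (r/√2)(1-t) - g_t(r) + 1`. Since `D(0) = 0`, the
quotient `D(r)/r` tends to `D'(0) = (1-t)/√2 - g_t'(0) = √2 (1-t)` as `r → 0`; as `r → ∞` the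
damped oscillation `g_t` stays bounded, so `D(r)/r → (1-t)/√2`. Both limits are nonzero as `t < 1`.
-/

open Real Filter

noncomputable def gt (t r : ℝ) : ℝ :=
  Real.exp (-(r / Real.sqrt 2)) * (t * Real.sin (r / Real.sqrt 2) + Real.cos (r / Real.sqrt 2))

open Topology

theorem HasDerivAt.tendsto_div_self_nhdsNE {𝕜 : Type*} [NontriviallyNormedField 𝕜]
    {f : 𝕜 → 𝕜} {c : 𝕜} (hf : HasDerivAt f c 0) (hf0 : f 0 = 0) :
    Tendsto (fun x => f x / x) (𝓝[≠] 0) (𝓝 c) := by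
  simpa [hf0, div_eq_inv_mul] using hf.tendsto_slope_zero

theorem tendsto_const_mul_div_of_tendsto_div {α 𝕜 : Type*} [NormedField 𝕜] {l : Filter α}
    {x f : α → 𝕜} {c : 𝕜} (k : 𝕜) (h : Tendsto (fun a => f a / x a) l (𝓝 c)) (hc : c ≠ 0) :
    Tendsto (fun a => k * x a / f a) l (𝓝 (k / c)) :=
  (tendsto_const_nhds.div h hc).congr fun a => div_div_eq_mul_div k (f a) (x a)

theorem gt_zero (t : ℝ) : gt t 0 = 1 := by
  simp [gt]

theorem hasDerivAt_gt_zero (t : ℝ) : HasDerivAt (gt t) ((t - 1) / √2) 0 := by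
  have hx : HasDerivAt (fun r : ℝ => r / √2) (1 / √2) 0 := (hasDerivAt_id 0).div_const _
  have h := hx.neg.exp.mul ((hx.sin.const_mul t).add hx.cos)
  refine h.congr_deriv ?_
  norm_num
  ring

theorem abs_gt_le (t : ℝ) {r : ℝ} (hr : 0 ≤ r) : |gt t r| ≤ |t| + 1 := by
  have hexp : Real.exp (-(r / √2)) ≤ 1 := exp_le_one_iff.mpr (neg_nonpos.mpr (by positivity))
  have hosc : |t * Real.sin (r / √2) + Real.cos (r / √2)| ≤ |t| + 1 := by
    refine (abs_add_le _ _).trans (add_le_add ?_ (abs_cos_le_one _))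
    rw [abs_mul]
    exact mul_le_of_le_one_right (abs_nonneg t) (abs_sin_le_one _)
  calc |gt t r| = Real.exp (-(r / √2)) * |t * Real.sin (r / √2) + Real.cos (r / √2)| := by
        rw [gt, abs_mul, abs_exp]
    _ ≤ 1 * (|t| + 1) := by gcongr
    _ = |t| + 1 := one_mul _

noncomputable def scatteringDenom (t r : ℝ) : ℝ :=
  r / √2 * (1 - t) - gt t r + 1

theorem scatteringDenom_zero (t : ℝ) : scatteringDenom t 0 = 0 := by
  simp [scatteringDenom, gt_zero]

theorem hasDerivAt_scatteringDenom_zero (t : ℝ) :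
    HasDerivAt (scatteringDenom t) (√2 * (1 - t)) 0 := by
  have h := ((((hasDerivAt_id (0 : ℝ)).div_const √2).mul_const (1 - t)).sub
    (hasDerivAt_gt_zero t)).add_const 1
  refine h.congr_deriv ?_
  field_simp
  rw [sq_sqrt zero_le_two]
  ring

theorem tendsto_scatteringDenom_div_atTop (t : ℝ) :
    Tendsto (fun r => scatteringDenom t r / r) atTop (𝓝 ((1 - t) / √2)) := by
  have hgt : Tendsto (fun r => r⁻¹ * gt t r) atTop (𝓝 0) :=
    tendsto_inv_atTop_zero.zero_mul_isBoundedUnder_le <| isBoundedUnder_of_eventually_le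
      (a := |t| + 1) <| (eventually_ge_atTop 0).mono fun r hr => abs_gt_le t hr
  have h := (tendsto_const_nhds (x := (1 - t) / √2)).sub (hgt.sub tendsto_inv_atTop_zero)
  rw [sub_zero, sub_zero] at h
  refine h.congr' ((eventually_ne_atTop 0).mono fun r hr => ?_)
  simp only [scatteringDenom]
  field_simp
  ring

/-- The two-center scattering length `a(r) = 2r/((r/√2)(1−t) − g_t(r) + 1)` satisfies
`a(r) → √2/(1−t)` as `r → 0⁺` and `a(r) → 2√2/(1−t)` as `r → ∞`. -/
theorem scattering_length_limits (t : ℝ) (ht : t < 1) :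
    Tendsto (fun r : ℝ => 2 * r / ((r / Real.sqrt 2) * (1 - t) - gt t r + 1))
      (nhdsWithin 0 (Set.Ioi 0)) (nhds (Real.sqrt 2 / (1 - t))) ∧
    Tendsto (fun r : ℝ => 2 * r / ((r / Real.sqrt 2) * (1 - t) - gt t r + 1))
      atTop (nhds (2 * Real.sqrt 2 / (1 - t))) := by
  have h1t : 1 - t ≠ 0 := sub_ne_zero.mpr ht.ne'
  have hs2 : √2 ≠ 0 := by positivity
  constructor
  · have h := tendsto_const_mul_div_of_tendsto_div 2
      (((hasDerivAt_scatteringDenom_zero t).tendsto_div_self_nhdsNE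
        (scatteringDenom_zero t)).mono_left (nhdsGT_le_nhdsNE 0)) (mul_ne_zero hs2 h1t)
    rwa [show √2 / (1 - t) = 2 / (√2 * (1 - t)) by
      field_simp; rw [sq_sqrt zero_le_two]]
  · have h := tendsto_const_mul_div_of_tendsto_div 2 (tendsto_scatteringDenom_div_atTop t)
      (div_ne_zero h1t hs2)
    rwa [← div_div_eq_mul_div]
end

section
/- Let λ_t(r) = r^{-2}[W(e^{ω(r)}) − ω(r)]² with ω(r) = −(r/√2)(1−t) + g_t(r), g_t(r) = e^{-r/√2}(t·sin(r/√2) + cos(r/√2)), and t < 1. Then λ_t extends continuously to r = 0 with λ_t(0) = (1−t)²/2, and λ_t(r) = (1−t)²/2 + O(r) as r → 0⁺. -/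
open Real Filter

noncomputable def omega (t r : ℝ) : ℝ := -(r / Real.sqrt 2) * (1 - t) + gt t r

/-!
If `w = W(e^y)` then `log w + w = y`, so `w - y = -log w`, which is `(1 - y)/2 + O((y - 1)²)`
as `y → 1`. Taylor's theorem gives `ω(r) = 1 - √2 (1 - t) r + O(r²)`, hence
`W(e^{ω(r)}) - ω(r) = ((1 - t)/√2) r + O(r²)`; squaring and dividing by `r²` gives
`λ_t(r) = (1 - t)²/2 + O(r)`.
-/

open Asymptotics Set Topology

theorem ContDiff.isBigO_sub_sub_smul_deriv {E : Type*} [NormedAddCommGroup E] [NormedSpace ℝ E]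
    {f : ℝ → E} (hf : ContDiff ℝ 2 f) (a : ℝ) :
    (fun x => f x - f a - (x - a) • deriv f a) =O[𝓝 a] (fun x => (x - a) ^ 2) := by
  obtain ⟨hdiff, -, hderiv⟩ := contDiff_succ_iff_deriv.1 (show ContDiff ℝ (1 + 1) f from hf)
  obtain ⟨C, hC0, hC⟩ := ((hderiv.differentiable one_ne_zero) a).isBigO_sub.exists_pos
  obtain ⟨ε, hε, hball⟩ := Metric.eventually_nhds_iff_ball.1 hC.bound
  refine IsBigO.of_bound C ?_
  filter_upwards [Metric.ball_mem_nhds a hε] with x hx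
  have hbound : ∀ z ∈ uIcc a x, ‖deriv f z - deriv f a‖ ≤ C * ‖x - a‖ := fun z hz => by
    have hza : ‖z - a‖ ≤ ‖x - a‖ := abs_sub_left_of_mem_uIcc hz
    refine (hball z ?_).trans (by gcongr)
    rw [Metric.mem_ball, dist_eq_norm]
    exact hza.trans_lt hx
  have hderivWithin : ∀ z ∈ uIcc a x, HasDerivWithinAt (fun z => f z - (z - a) • deriv f a)
      (deriv f z - deriv f a) (uIcc a x) z := fun z _ => by
    have hz := (hdiff z).hasDerivAt.sub (((hasDerivAt_id z).sub_const a).smul_const (deriv f a))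
    rw [one_smul] at hz
    exact hz.hasDerivWithinAt
  have hmvt := (convex_uIcc a x).norm_image_sub_le_of_norm_hasDerivWithin_le hderivWithin hbound
    left_mem_uIcc right_mem_uIcc
  simpa [norm_pow, sq, sub_right_comm, mul_assoc] using hmvt

theorem abs_sub_one_le_abs_log_add_sub_one {w : ℝ} (hw : 0 < w) : |w - 1| ≤ |log w + w - 1| := by
  rcases le_total 1 w with h | h
  · have := log_nonneg h
    rw [abs_of_nonneg (by linarith), abs_of_nonneg (by linarith)]
    linarith
  · have := log_nonpos hw.le h
    rw [abs_of_nonpos (by linarith), abs_of_nonpos (by linarith)]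
    linarith

theorem abs_sub_sub_one_sub_div_two_le_sq {w y : ℝ} (hw : 0 < w) (hwy : w * exp w = exp y)
    (hy : |y - 1| ≤ 1 / 2) : |w - y - (1 - y) / 2| ≤ (y - 1) ^ 2 := by
  have hlog : log w + w = y := by
    simpa [log_mul hw.ne' (exp_ne_zero w)] using congrArg log hwy
  have hw1 : |1 - w| ≤ |y - 1| := by
    rw [abs_sub_comm, ← hlog]; exact abs_sub_one_le_abs_log_add_sub_one hw
  have hlog_taylor : |(1 - w) + log w| ≤ |1 - w| ^ 2 / (1 - |1 - w|) := by
    simpa using abs_log_sub_add_sum_range_le (x := 1 - w) (by linarith) 1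
  have hsq : |1 - w| ^ 2 ≤ (y - 1) ^ 2 := by
    rw [← sq_abs (y - 1)]; gcongr
  calc |w - y - (1 - y) / 2| = |(1 - w) + log w| / 2 := by
        rw [← hlog, show w - (log w + w) - (1 - (log w + w)) / 2 = -((1 - w) + log w) / 2 by ring,
          abs_div, abs_neg, abs_two]
    _ ≤ |1 - w| ^ 2 / (1 - |1 - w|) / 2 := by gcongr
    _ ≤ (y - 1) ^ 2 := by
        rw [div_div, div_le_iff₀ (by linarith)]
        nlinarith [abs_nonneg (1 - w)]

theorem isBigO_sq_div_sq_sub_sq {D : ℝ → ℝ} {a : ℝ}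
    (h : (fun r => D r - a * r) =O[𝓝 0] (fun r => r ^ 2)) :
    (fun r => D r ^ 2 / r ^ 2 - a ^ 2) =O[𝓝[≠] 0] id := by
  have hsq : (fun r : ℝ => r ^ 2) =O[𝓝 0] id := (isLittleO_pow_id one_lt_two).isBigO
  have hadd : (fun r => D r + a * r) =O[𝓝 0] id :=
    ((h.trans hsq).add ((isBigO_refl id _).const_mul_left (2 * a))).congr_left fun r => by
      simp only [id]; ring
  have hprod := ((h.mul hadd).mono nhdsWithin_le_nhds).mul
    (isBigO_refl (fun r : ℝ => (r ^ 2)⁻¹) (𝓝[≠] 0))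
  refine hprod.congr' ?_ ?_ <;> filter_upwards [self_mem_nhdsWithin] with r (hr : r ≠ 0)
  · field_simp; ring
  · field_simp

theorem exists_pos_bound_of_isBigO_nhdsGT {f : ℝ → ℝ} (h : f =O[𝓝[>] 0] id) :
    ∃ C > 0, ∃ δ > 0, ∀ r, 0 < r → r < δ → |f r| ≤ C * r := by
  obtain ⟨C, hC, hCw⟩ := h.exists_pos
  obtain ⟨δ, hδ, hsub⟩ := mem_nhdsGT_iff_exists_Ioo_subset.1 hCw.bound
  exact ⟨C, hC, δ, hδ, fun r hr hrδ => by simpa [abs_of_pos hr] using hsub ⟨hr, hrδ⟩⟩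

theorem contDiff_omega (t : ℝ) : ContDiff ℝ 2 (omega t) := by
  unfold omega gt; fun_prop

theorem omega_zero (t : ℝ) : omega t 0 = 1 := by
  simp [omega, gt]

theorem hasDerivAt_omega_zero (t : ℝ) : HasDerivAt (omega t) (-(√2 * (1 - t))) 0 := by
  have hu : HasDerivAt (fun r : ℝ => r / √2) (1 / √2) 0 := (hasDerivAt_id 0).div_const √2
  have h : HasDerivAt (omega t) _ 0 :=
    (hu.neg.mul_const (1 - t)).add (hu.neg.exp.mul ((hu.sin.const_mul t).add hu.cos))
  refine h.congr_deriv ?_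
  have hs : √2 * √2 = 2 := mul_self_sqrt zero_le_two
  simp only [one_div, neg_mul, Pi.neg_apply, zero_div, neg_zero, exp_zero, mul_neg, one_mul, sin_zero,
    mul_zero, cos_zero, zero_add, mul_one, zero_mul, add_zero]
  field_simp
  linear_combination (1 - t) * hs

theorem isBigO_omega_sub_one_add_mul (t : ℝ) :
    (fun r => omega t r - 1 + √2 * (1 - t) * r) =O[𝓝 0] (fun r => r ^ 2) := by
  have htaylor := (contDiff_omega t).isBigO_sub_sub_smul_deriv 0
  simp only [omega_zero, (hasDerivAt_omega_zero t).deriv, sub_zero, smul_eq_mul] at htaylor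
  exact htaylor.congr_left fun r => by ring

theorem isBigO_lambert_exp_omega_sub_omega_sub_mul (W : ℝ → ℝ)
    (hW : ∀ x : ℝ, 0 < x → 0 < W x ∧ W x * Real.exp (W x) = x) (t : ℝ) :
    (fun r => W (exp (omega t r)) - omega t r - (1 - t) / √2 * r) =O[𝓝 0] (fun r => r ^ 2) := by
  have hω := isBigO_omega_sub_one_add_mul t
  have hω₁ : (fun r => omega t r - 1) =O[𝓝 0] (fun r => r) :=
    ((hω.trans (isLittleO_pow_id one_lt_two).isBigO).sub
      ((isBigO_refl id _).const_mul_left (√2 * (1 - t)))).congr_left fun r => by simp only [id]; ring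
  have hnear : ∀ᶠ r in 𝓝 0, |omega t r - 1| ≤ 1 / 2 := by
    have hlim : Tendsto (omega t) (𝓝 0) (𝓝 1) :=
      omega_zero t ▸ (contDiff_omega t).continuous.tendsto 0
    exact (hlim.sub_const 1).abs.eventually (ge_mem_nhds (by norm_num))
  have hlam : (fun r => W (exp (omega t r)) - omega t r - (1 - omega t r) / 2)
      =O[𝓝 0] (fun r => (omega t r - 1) ^ 2) := by
    refine IsBigO.of_bound 1 ?_
    filter_upwards [hnear] with r hr
    obtain ⟨hpos, hmul⟩ := hW _ (exp_pos (omega t r))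
    rw [Real.norm_eq_abs, Real.norm_eq_abs, abs_of_nonneg (sq_nonneg (omega t r - 1)), one_mul]
    exact abs_sub_sub_one_sub_div_two_le_sq hpos hmul hr
  have hs : √2 ^ 2 = 2 := sq_sqrt zero_le_two
  refine ((hlam.trans (hω₁.pow 2)).sub (hω.const_mul_left (1 / 2))).congr_left fun r => ?_
  field_simp
  linear_combination (t * r - r) * hs

theorem lambdat_asymptotics_zero_general
    (W : ℝ → ℝ) (hW : ∀ x : ℝ, 0 < x → 0 < W x ∧ W x * Real.exp (W x) = x)
    (t : ℝ) :
    Tendsto (fun r : ℝ => (W (Real.exp (omega t r)) - omega t r) ^ 2 / r ^ 2)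
      (nhdsWithin 0 (Set.Ioi 0)) (nhds ((1 - t) ^ 2 / 2)) ∧
    ∃ C > (0:ℝ), ∃ δ > (0:ℝ), ∀ r : ℝ, 0 < r → r < δ →
      |(W (Real.exp (omega t r)) - omega t r) ^ 2 / r ^ 2 - (1 - t) ^ 2 / 2| ≤ C * r := by
  have ha : ((1 - t) / √2) ^ 2 = (1 - t) ^ 2 / 2 := by rw [div_pow, sq_sqrt zero_le_two]
  have hO := (isBigO_sq_div_sq_sub_sq (isBigO_lambert_exp_omega_sub_omega_sub_mul W hW t)).mono
    (nhdsWithin_mono 0 fun r (hr : 0 < r) => hr.ne')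
  rw [ha] at hO
  refine ⟨?_, exists_pos_bound_of_isBigO_nhdsGT hO⟩
  exact tendsto_sub_nhds_zero_iff.1 (hO.trans_tendsto (tendsto_id.mono_left nhdsWithin_le_nhds))

/-- For `t < 1`, with `λ_t(r) = r^{-2}[W(e^{ω(r)}) − ω(r)]²`, `λ_t` extends continuously
to `r = 0` with value `(1−t)²/2`, and `λ_t(r) = (1−t)²/2 + O(r)` as `r → 0⁺`.
`W` is the principal Lambert function, characterized on `(0,∞)` by
`W(x) > 0` and `W(x)e^{W(x)} = x`. -/
theorem lambdat_asymptotics_zero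
    (W : ℝ → ℝ) (hW : ∀ x : ℝ, 0 < x → 0 < W x ∧ W x * Real.exp (W x) = x)
    (t : ℝ) (ht : t < 1) :
    Tendsto (fun r : ℝ => (W (Real.exp (omega t r)) - omega t r) ^ 2 / r ^ 2)
      (nhdsWithin 0 (Set.Ioi 0)) (nhds ((1 - t) ^ 2 / 2)) ∧
    ∃ C > (0:ℝ), ∃ δ > (0:ℝ), ∀ r : ℝ, 0 < r → r < δ →
      |(W (Real.exp (omega t r)) - omega t r) ^ 2 / r ^ 2 - (1 - t) ^ 2 / 2| ≤ C * r :=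
  lambdat_asymptotics_zero_general W hW t
end
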